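/- arXiv:math/0310273 — 2 statements merged into one kernel-verified Lean document; each statement's English description precedes it below -/
import Mathlib

section
/- Let (a,b,e;c,d,f) be an admissible labeling of the edges of a tetrahedron with column sums C_1 ≥ C_2 ≥ C_3, and for an integer s define p'_s = 6(s − (a+b+c+d+e+f+1/2)/3)^2 − (1/6)(a^2+b^2+c^2+d^2+e^2+f^2) − (1/3)(ac+ef+bd) + (1/6)(ad+ae+de+bc+be+ce+ab+af+bf+cd+cf+df) + (1/3)(a+b+c+d+e+f) − 1/6. Then M = (C_2+C_3)/2, p'_M = (C_1−C_2)(C_1−C_3)/2 + C_1, and for every integer s with m ≤ s ≤ M one has p'_s ≥ (C_1−C_2)(C_1−C_3)/2 + C_1. -/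
open Filter Finset

/-- A triple of nonnegative integers is admissible if its sum is even and
it satisfies every triangle inequality. -/
def Admissible (a b c : ℕ) : Prop :=
  Even (a + b + c) ∧ a ≤ b + c ∧ b ≤ a + c ∧ c ≤ a + b

/-- A labeling (a,b,e;c,d,f) of the edges of a tetrahedron is admissible if the
four vertex triples (a,d,e), (b,c,e), (a,b,f), (c,d,f) are admissible. -/
def TetAdmissible (a b e c d f : ℕ) : Prop :=
  Admissible a d e ∧ Admissible b c e ∧ Admissible a b f ∧ Admissible c d f

/-- The quantized integer `[n] = (t^{2n} - t^{-2n})/(t^2 - t^{-2})`. -/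
noncomputable def qint (t : ℝ) (n : ℕ) : ℝ :=
  (t ^ (2 * n) - (t ^ (2 * n))⁻¹) / (t ^ 2 - (t ^ 2)⁻¹)

/-- The quantized factorial `[n]! = [n]·[n-1]!`, `[0]! = 1`. -/
noncomputable def qfact (t : ℝ) : ℕ → ℝ
  | 0 => 1
  | n + 1 => qint t (n + 1) * qfact t n

/-- `θ(a,b,c)` for an admissible triple. -/
noncomputable def qtheta (t : ℝ) (a b c : ℕ) : ℝ :=
  (-1 : ℝ) ^ ((a + b + c) / 2) *
    (qfact t ((a + b + c) / 2 + 1) * qfact t ((a + b - c) / 2) *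
      qfact t ((a + c - b) / 2) * qfact t ((b + c - a) / 2)) /
    (qfact t a * qfact t b * qfact t c)

/-- Product of the quantized factorials of the strand numbers of a triple. -/
noncomputable def strandProd (t : ℝ) (a b c : ℕ) : ℝ :=
  qfact t ((a + b - c) / 2) * qfact t ((b + c - a) / 2) * qfact t ((a + c - b) / 2)

/-- The tetrahedral coefficient `Tet(a,b,e;c,d,f)`. -/
noncomputable def Tet (t : ℝ) (a b e c d f : ℕ) : ℝ :=
  (strandProd t a d e * strandProd t b c e * strandProd t a b f * strandProd t c d f) /
      (qfact t a * qfact t b * qfact t c * qfact t d * qfact t e * qfact t f) *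
    ∑ s ∈ Finset.Icc
        (max ((a + d + e) / 2) (max ((b + c + e) / 2) (max ((a + b + f) / 2) ((c + d + f) / 2))))
        (min ((a + b + c + d) / 2) (min ((a + c + e + f) / 2) ((b + d + e + f) / 2))),
      ((-1 : ℝ) ^ s * qfact t (s + 1)) /
        (qfact t ((a + b + c + d) / 2 - s) * qfact t ((a + c + e + f) / 2 - s) *
          qfact t ((b + d + e + f) / 2 - s) *
          qfact t (s - (a + d + e) / 2) * qfact t (s - (b + c + e) / 2) *
          qfact t (s - (a + b + f) / 2) * qfact t (s - (c + d + f) / 2))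

/-- The unitary 6j-symbol `{a,b,e;c,d,f}_u`. -/
noncomputable def sixj (t : ℝ) (a b e c d f : ℕ) : ℝ :=
  Tet t a b e c d f /
    Real.sqrt (qtheta t a d e * qtheta t b c e * qtheta t a b f * qtheta t c d f)

/-- The q-Pochhammer symbol `(x;q)_n`. -/
noncomputable def qPoch (x q : ℝ) (n : ℕ) : ℝ := ∏ i ∈ Finset.range n, (1 - x * q ^ i)

/-- The infinite q-Pochhammer symbol `(x;q)_∞`. -/
noncomputable def qPochInf (x q : ℝ) : ℝ := ∏' i : ℕ, (1 - x * q ^ i)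

/-!
Both sides of the claim depend on the labeling only through its three column sums: `p'_s` is a
quadratic in `s` whose coefficients are the power sums `Σ Cᵢ` and `Σ Cᵢ²`, and `M` is half the
smallest sum of two columns, i.e. `(C₂ + C₃)/2`, an integer because the admissibility of the four
vertex triples forces all column sums to have the same parity. The parabola `p'` has its vertex
at `(Σ Cᵢ + 1/2)/3`, which lies to the right of `M` since `2 C₁ ≥ C₂ + C₃`, so `p'` decreases up
to `M`.
-/

lemma triple_eq_cases {α : Type*} {p q r x y z : α} (h : ({p, q, r} : Multiset α) = {x, y, z}) :
    (p = x ∧ q = y ∧ r = z) ∨ (p = x ∧ q = z ∧ r = y) ∨ (p = y ∧ q = x ∧ r = z) ∨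
      (p = y ∧ q = z ∧ r = x) ∨ (p = z ∧ q = x ∧ r = y) ∨ (p = z ∧ q = y ∧ r = x) := by
  simp only [Multiset.insert_eq_cons, Multiset.cons_eq_cons, Multiset.singleton_eq_cons_iff] at h
  aesop

lemma map_add_eq_of_triple_eq {α β : Type*} [AddCommMonoid β] (g : α → β) {p q r x y z : α}
    (h : ({p, q, r} : Multiset α) = {x, y, z}) : g p + g q + g r = g x + g y + g z := by
  simpa [add_assoc] using congrArg (fun m => (m.map g).sum) h

lemma min_add_pairs_eq_of_triple_eq {x y z C1 C2 C3 : ℕ}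
    (hC : ({C1, C2, C3} : Multiset ℕ) = {x, y, z}) (h12 : C2 ≤ C1) (h23 : C3 ≤ C2) :
    min (x + y) (min (x + z) (y + z)) = C2 + C3 := by
  rcases triple_eq_cases hC with ⟨rfl, rfl, rfl⟩ | ⟨rfl, rfl, rfl⟩ | ⟨rfl, rfl, rfl⟩ |
    ⟨rfl, rfl, rfl⟩ | ⟨rfl, rfl, rfl⟩ | ⟨rfl, rfl, rfl⟩ <;> omega

lemma TetAdmissible.colSum_mod_two {a b e c d f : ℕ} (h : TetAdmissible a b e c d f) :
    ∀ x ∈ ({a + c, b + d, e + f} : Multiset ℕ), x % 2 = (a + c) % 2 := by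
  obtain ⟨⟨⟨k₁, hk₁⟩, -⟩, ⟨⟨k₂, hk₂⟩, -⟩, ⟨⟨k₃, hk₃⟩, -⟩, -⟩ := h
  simp only [Multiset.insert_eq_cons, Multiset.mem_cons, Multiset.mem_singleton]
  rintro x (rfl | rfl | rfl) <;> omega

/-- The polynomial `p'_s` of the labeling `(a,b,e;c,d,f)`. -/
noncomputable def pPrime (a b e c d f s : ℝ) : ℝ :=
  6 * (s - ((a + b + c + d + e + f) + 1 / 2) / 3) ^ 2
    - (1 / 6) * (a ^ 2 + b ^ 2 + c ^ 2 + d ^ 2 + e ^ 2 + f ^ 2)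
    - (1 / 3) * (a * c + e * f + b * d)
    + (1 / 6) * (a * d + a * e + d * e + b * c + b * e + c * e + a * b + a * f + b * f +
        c * d + c * f + d * f)
    + (1 / 3) * (a + b + c + d + e + f) - 1 / 6

noncomputable def pPrimeOfPowerSums (σ q s : ℝ) : ℝ :=
  6 * (s - (σ + 1 / 2) / 3) ^ 2 + (σ ^ 2 - 3 * q) / 12 + σ / 3 - 1 / 6

lemma pPrime_eq_pPrimeOfPowerSums (a b e c d f s : ℝ) :
    pPrime a b e c d f s =
      pPrimeOfPowerSums (a + c + (b + d) + (e + f))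
        ((a + c) ^ 2 + (b + d) ^ 2 + (e + f) ^ 2) s := by
  unfold pPrime pPrimeOfPowerSums
  ring

lemma pPrimeOfPowerSums_sub (σ q s t : ℝ) :
    pPrimeOfPowerSums σ q s - pPrimeOfPowerSums σ q t =
      6 * (t - s) * (2 * (σ + 1 / 2) / 3 - s - t) := by
  unfold pPrimeOfPowerSums
  ring

lemma pPrimeOfPowerSums_midpoint (x y z : ℝ) :
    pPrimeOfPowerSums (x + y + z) (x ^ 2 + y ^ 2 + z ^ 2) ((y + z) / 2) =
      (x - y) * (x - z) / 2 + x := by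
  unfold pPrimeOfPowerSums
  ring

lemma le_pPrimeOfPowerSums {x y z s : ℝ} (hyz : y + z ≤ 2 * x) (hs : s ≤ (y + z) / 2) :
    (x - y) * (x - z) / 2 + x ≤ pPrimeOfPowerSums (x + y + z) (x ^ 2 + y ^ 2 + z ^ 2) s := by
  rw [← pPrimeOfPowerSums_midpoint, ← sub_nonneg, pPrimeOfPowerSums_sub]
  have hvertex : 0 ≤ 2 * (x + y + z + 1 / 2) / 3 - s - (y + z) / 2 := by linarith
  have hleft : 0 ≤ (y + z) / 2 - s := by linarith
  positivity

/-- For an admissible tetrahedral labeling with ordered column sums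
C₁ ≥ C₂ ≥ C₃, one has M = (C₂+C₃)/2, p'_M = (C₁−C₂)(C₁−C₃)/2 + C₁, and
p'_s ≥ (C₁−C₂)(C₁−C₃)/2 + C₁ for all m ≤ s ≤ M. -/
theorem stmt_7 (a b e c d f C1 C2 C3 : ℕ) (h : TetAdmissible a b e c d f)
    (hC : ({C1, C2, C3} : Multiset ℕ) = {a + c, b + d, e + f})
    (h12 : C2 ≤ C1) (h23 : C3 ≤ C2) :
    min ((a + b + c + d) / 2) (min ((a + c + e + f) / 2) ((b + d + e + f) / 2)) =
        (C2 + C3) / 2 ∧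
    (fun s : ℤ =>
        6 * ((s : ℝ) - (((a : ℝ) + b + c + d + e + f) + 1 / 2) / 3) ^ 2
          - (1 / 6) * ((a : ℝ) ^ 2 + (b : ℝ) ^ 2 + (c : ℝ) ^ 2 + (d : ℝ) ^ 2 +
              (e : ℝ) ^ 2 + (f : ℝ) ^ 2)
          - (1 / 3) * ((a : ℝ) * c + (e : ℝ) * f + (b : ℝ) * d)
          + (1 / 6) * ((a : ℝ) * d + (a : ℝ) * e + (d : ℝ) * e + (b : ℝ) * c +
              (b : ℝ) * e + (c : ℝ) * e + (a : ℝ) * b + (a : ℝ) * f + (b : ℝ) * f +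
              (c : ℝ) * d + (c : ℝ) * f + (d : ℝ) * f)
          + (1 / 3) * ((a : ℝ) + b + c + d + e + f) - 1 / 6)
        (((C2 + C3) / 2 : ℕ) : ℤ) =
      ((C1 : ℝ) - C2) * ((C1 : ℝ) - C3) / 2 + C1 ∧
    ∀ s : ℤ,
      ((max ((a + d + e) / 2) (max ((b + c + e) / 2) (max ((a + b + f) / 2) ((c + d + f) / 2))) :
          ℕ) : ℤ) ≤ s →
      s ≤ (((C2 + C3) / 2 : ℕ) : ℤ) →
      ((C1 : ℝ) - C2) * ((C1 : ℝ) - C3) / 2 + C1 ≤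
        (fun s : ℤ =>
          6 * ((s : ℝ) - (((a : ℝ) + b + c + d + e + f) + 1 / 2) / 3) ^ 2
            - (1 / 6) * ((a : ℝ) ^ 2 + (b : ℝ) ^ 2 + (c : ℝ) ^ 2 + (d : ℝ) ^ 2 +
                (e : ℝ) ^ 2 + (f : ℝ) ^ 2)
            - (1 / 3) * ((a : ℝ) * c + (e : ℝ) * f + (b : ℝ) * d)
            + (1 / 6) * ((a : ℝ) * d + (a : ℝ) * e + (d : ℝ) * e + (b : ℝ) * c +
                (b : ℝ) * e + (c : ℝ) * e + (a : ℝ) * b + (a : ℝ) * f + (b : ℝ) * f +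
                (c : ℝ) * d + (c : ℝ) * f + (d : ℝ) * f)
            + (1 / 3) * ((a : ℝ) + b + c + d + e + f) - 1 / 6) s := by
  have hsum := map_add_eq_of_triple_eq (fun n : ℕ => (n : ℝ)) hC
  have hsq := map_add_eq_of_triple_eq (fun n : ℕ => (n : ℝ) ^ 2) hC
  push_cast at hsum hsq
  have hp (s : ℝ) : pPrime a b e c d f s =
      pPrimeOfPowerSums (C1 + C2 + C3) (C1 ^ 2 + C2 ^ 2 + C3 ^ 2) s := by
    rw [pPrime_eq_pPrimeOfPowerSums, hsum, hsq]
  have hmod := h.colSum_mod_two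
  rw [← hC] at hmod
  have hdvd : 2 ∣ C2 + C3 := by
    have := hmod C2 (by simp)
    have := hmod C3 (by simp)
    omega
  have hM : (((C2 + C3) / 2 : ℕ) : ℝ) = ((C2 : ℝ) + C3) / 2 := by
    rw [Nat.cast_div_charZero hdvd]
    push_cast
    ring
  have h2C1 : (C2 : ℝ) + C3 ≤ 2 * C1 := by exact_mod_cast (by omega : C2 + C3 ≤ 2 * C1)
  refine ⟨?_, ?_, fun s _ hs => ?_⟩
  · have := min_add_pairs_eq_of_triple_eq hC h12 h23
    omega
  · change pPrime a b e c d f _ = _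
    rw [hp, Int.cast_natCast, hM, pPrimeOfPowerSums_midpoint]
  · change _ ≤ pPrime a b e c d f s
    have hs' : (s : ℝ) ≤ ((C2 : ℝ) + C3) / 2 := by
      rw [← hM, ← Int.cast_natCast]
      exact Int.cast_le.2 hs
    rw [hp]
    exact le_pPrimeOfPowerSums h2C1 hs'
end

section
/- Let C_1 ≥ C_2 ≥ C_3 be nonnegative integers such that C_1−C_2 and C_1−C_3 are even. Then 3C_1 − C_2 − C_3 − gcd(C_1−C_2, C_1−C_3) ≤ (C_1−C_2)(C_1−C_3)/2 + C_1, with the convention gcd(0,n) = n and gcd(0,0) = 0. -/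
open Filter Finset

/-- For positive `a`, `b` this is `(a - 1) * (b - 1) ≥ 0` together with `gcd a b ≥ 1`;
if one of them vanishes, the gcd equals the other and the inequality is an equality. -/
theorem Nat.add_le_mul_add_gcd (a b : ℕ) : a + b ≤ a * b + Nat.gcd a b := by
  rcases Nat.eq_zero_or_pos a with rfl | ha
  · simp
  rcases Nat.eq_zero_or_pos b with rfl | hb
  · simp
  have hg : 1 ≤ Nat.gcd a b := Nat.gcd_pos_of_pos_left b ha
  nlinarith

theorem Nat.add_le_mul_div_two_add_gcd_of_even {x y : ℕ} (hx : Even x) (hy : Even y) :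
    x + y ≤ x * y / 2 + Nat.gcd x y := by
  obtain ⟨a, rfl⟩ := hx.two_dvd
  obtain ⟨b, rfl⟩ := hy.two_dvd
  have hprod : 2 * a * (2 * b) / 2 = 2 * (a * b) := by
    rw [show 2 * a * (2 * b) = 2 * (2 * (a * b)) by ring, Nat.mul_div_cancel_left _ two_pos]
  rw [hprod, Nat.gcd_mul_left]
  linarith [Nat.add_le_mul_add_gcd a b]

theorem stmt_15_general (C1 C2 C3 : ℕ)
    (he1 : Even (C1 - C2)) (he2 : Even (C1 - C3)) :
    3 * C1 - C2 - C3 - Nat.gcd (C1 - C2) (C1 - C3) ≤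
      (C1 - C2) * (C1 - C3) / 2 + C1 := by
  have := Nat.add_le_mul_div_two_add_gcd_of_even he1 he2
  omega

/-- For C₁ ≥ C₂ ≥ C₃ with C₁−C₂ and C₁−C₃ even,
3C₁ − C₂ − C₃ − gcd(C₁−C₂, C₁−C₃) ≤ (C₁−C₂)(C₁−C₃)/2 + C₁. -/
theorem stmt_15 (C1 C2 C3 : ℕ) (h12 : C2 ≤ C1) (h23 : C3 ≤ C2)
    (he1 : Even (C1 - C2)) (he2 : Even (C1 - C3)) :
    3 * C1 - C2 - C3 - Nat.gcd (C1 - C2) (C1 - C3) ≤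
      (C1 - C2) * (C1 - C3) / 2 + C1 :=
  stmt_15_general C1 C2 C3 he1 he2
end
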